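/- arXiv:1707.08751 — 2 statements merged into one kernel-verified Lean document; each statement's English description precedes it below -/
import Mathlib

section
/- The following are equivalent: (a) the system is T-Δ-ε-acceptable, i.e., for every c : ι, μ c {r | r is T-Δ-acceptable} ≥ 1 - ε; (b) there exists acc : Set Run with (∀ c, μ c acc ≥ 1 - ε) such that every r ∈ acc satisfies: for all i, j, X, m, honest r m i and X a T-prefix of ledger r m i imply that for all m' ≥ m + Δ, honest r m' j implies X is a T-prefix of ledger r m' j; (c) there exists acc : Set Run with (∀ c, μ c acc ≥ 1 - ε) such that every r ∈ acc satisfies: for all i, X, m, honest r m i and X a T-prefix of ledger r m i imply that for all m' ≥ m + Δ, (E_H^{acc} TP_X) (r, m') holds; (d) there exists acc : Set Run with (∀ c, μ c acc ≥ 1 - ε) such that every r ∈ acc satisfies: for all i, X, m, honest r m i and X a T-prefix of ledger r m i imply (C^{acc} TP_X) (r, m). -/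
/-- `X` is a `T`-prefix of `L`: `X` is a prefix of `L` and `X.length + T ≤ L.length`. -/
def TPrefix {Tx : Type*} (T : ℕ) (X L : List Tx) : Prop :=
  X <+: L ∧ X.length + T ≤ L.length

/-- The run `r` of a system is `T`-`Δ`-acceptable. -/
def Acceptable {Run Agent Tx : Type*} (T Δ : ℕ) (honest : Run → ℕ → Agent → Prop)
    (ledger : Run → ℕ → Agent → List Tx) (r : Run) : Prop :=
  ∀ (m m' : ℕ) (i j : Agent) (X : List Tx), m ≤ m' → honest r m i →
    TPrefix T X (ledger r m i) → honest r (m' + Δ) j →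
    TPrefix T X (ledger r (m' + Δ) j)

/-- `q ∼_i p`: agent `i` cannot distinguish the points `q` and `p`
(`i`'s local state is the same at both points, and `i` is present at both). -/
def Sim {Run Agent σ : Type*} (localState : Run → ℕ → Agent → Option σ)
    (i : Agent) (q p : Run × ℕ) : Prop :=
  localState p.1 p.2 i = localState q.1 q.2 i ∧ (localState p.1 p.2 i).isSome

/-- The agent-relative formula `TP_X`: "`X` is a `T`-prefix of my ledger". -/
def TP {Run Agent Tx : Type*} (T : ℕ) (ledger : Run → ℕ → Agent → List Tx)
    (X : List Tx) (p : Run × ℕ) (i : Agent) : Prop :=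
  TPrefix T X (ledger p.1 p.2 i)

/-- The `acc`-guarded operator `E_H^{acc}`: `(E_H^{acc} φ) (r,m)` iff for every agent
`j` honest at `(r,m)` and every point `(r',m') ∼_j (r,m)` with `j` honest there and
`r' ∈ acc`, `φ (r',m') j` holds. -/
def EHacc {Run Agent σ : Type*} (honest : Run → ℕ → Agent → Prop)
    (localState : Run → ℕ → Agent → Option σ) (acc : Set Run)
    (φ : Run × ℕ → Agent → Prop) (p : Run × ℕ) : Prop :=
  ∀ j, honest p.1 p.2 j → ∀ q, Sim localState j q p → honest q.1 q.2 j →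
    q.1 ∈ acc → φ q j

/-- `(○^Δ□ φ) (r, m)`: `φ` holds at `(r, m')` for all `m' ≥ m + Δ`. -/
def NextBox {Run : Type*} (Δ : ℕ) (φ : Run × ℕ → Prop) (p : Run × ℕ) : Prop :=
  ∀ m', p.2 + Δ ≤ m' → φ (p.1, m')

/-- `IterAcc Δ honest localState acc n φ` is `(○^Δ□ ∘ E_H^{acc})^{n+1} φ`:
`(○^Δ□ ∘ E_H^{acc})^1 φ = ○^Δ□(E_H^{acc} φ)` and
`(○^Δ□ ∘ E_H^{acc})^{n+1} φ = ○^Δ□(E_H^{acc} ((○^Δ□ ∘ E_H^{acc})^n φ))`. -/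
def IterAcc {Run Agent σ : Type*} (Δ : ℕ) (honest : Run → ℕ → Agent → Prop)
    (localState : Run → ℕ → Agent → Option σ) (acc : Set Run) :
    ℕ → (Run × ℕ → Agent → Prop) → (Run × ℕ → Prop)
  | 0, φ => NextBox Δ (EHacc honest localState acc φ)
  | n + 1, φ => NextBox Δ (EHacc honest localState acc
      (fun q _ => IterAcc Δ honest localState acc n φ q))

/-- `acc`-relative `Δ`-`□`-common knowledge among the honest agents:
`(C^{acc} φ) p := ∀ n ≥ 1, ((○^Δ□ ∘ E_H^{acc})^n φ) p`. -/
def CKacc {Run Agent σ : Type*} (Δ : ℕ) (honest : Run → ℕ → Agent → Prop)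
    (localState : Run → ℕ → Agent → Option σ) (acc : Set Run)
    (φ : Run × ℕ → Agent → Prop) (p : Run × ℕ) : Prop :=
  ∀ n : ℕ, IterAcc Δ honest localState acc n φ p

/-!
Acceptability of a run is a statement about all of its points, so (a) ↔ (b) is the choice
`acc := {r | r is acceptable}` together with monotonicity of measures. Since the ledger is a
function of the local state, `TP_X` is invariant under indistinguishability; at a point of a
run in `acc` every honest agent considers that very point possible, so there `E_H^{acc} TP_X`
says exactly that every honest agent has `X` as a `T`-prefix, which gives (b) ↔ (c).
Finally (c) is the first level of `C^{acc}`, and it feeds itself: the point at which an honest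
agent is required to know `TP_X` is again a point of a run in `acc` where that agent is honest
and has `X` as a `T`-prefix, so induction on the level gives (c) → (d).
-/

section Characterization

variable {Run Agent Tx σ : Type*} {T Δ : ℕ} {honest : Run → ℕ → Agent → Prop}
  {ledger : Run → ℕ → Agent → List Tx} {localState : Run → ℕ → Agent → Option σ}

theorem acceptable_iff {r : Run} :
    Acceptable T Δ honest ledger r ↔
      ∀ (i j : Agent) (X : List Tx) (m : ℕ), honest r m i → TPrefix T X (ledger r m i) →
        ∀ m', m + Δ ≤ m' → honest r m' j → TPrefix T X (ledger r m' j) := by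
  constructor
  · intro hr i j X m hi hX m' hm' hj
    obtain ⟨k, rfl⟩ := Nat.exists_eq_add_of_le hm'
    rw [add_right_comm] at hj ⊢
    exact hr m (m + k) i j X (Nat.le_add_right m k) hi hX hj
  · intro h m m' i j X hm hi hX hj
    exact h i j X m hi hX (m' + Δ) (by omega) hj

theorem sim_self_of_honest
    (hpresent : ∀ r m i, honest r m i → localState r m i ≠ none)
    {i : Agent} {p : Run × ℕ} (hi : honest p.1 p.2 i) : Sim localState i p p :=
  ⟨rfl, Option.isSome_iff_ne_none.mpr (hpresent _ _ _ hi)⟩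

theorem tp_of_sim
    (hledger : ∀ i q p, Sim localState i q p → ledger q.1 q.2 i = ledger p.1 p.2 i)
    (X : List Tx) : ∀ i q p, Sim localState i q p → TP T ledger X p i → TP T ledger X q i :=
  fun i q p hqp hp => by rwa [TP, hledger i q p hqp]

theorem ehacc_iff_forall_honest
    (hpresent : ∀ r m i, honest r m i → localState r m i ≠ none)
    {acc : Set Run} {φ : Run × ℕ → Agent → Prop}
    (hφ : ∀ i q p, Sim localState i q p → φ p i → φ q i) {p : Run × ℕ} (hp : p.1 ∈ acc) :
    EHacc honest localState acc φ p ↔ ∀ j, honest p.1 p.2 j → φ p j :=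
  ⟨fun h j hj => h j hj p (sim_self_of_honest hpresent hj) hj hp,
    fun h j hj q hqp _ _ => hφ j q p hqp (h j hj)⟩

theorem ckacc_of_iterAcc_zero {acc : Set Run} {φ : Run × ℕ → Agent → Prop}
    (h : ∀ r ∈ acc, ∀ (i : Agent) (m : ℕ), honest r m i → φ (r, m) i →
      IterAcc Δ honest localState acc 0 φ (r, m)) :
    ∀ r ∈ acc, ∀ (i : Agent) (m : ℕ), honest r m i → φ (r, m) i →
      CKacc Δ honest localState acc φ (r, m) := by
  intro r hr i m hi hφ n
  induction n generalizing r i m with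
  | zero => exact h r hr i m hi hφ
  | succ n ih =>
    intro m' hm' j hj q hqp hqj hq
    exact ih q.1 hq j q.2 hqj (h r hr i m hi hφ m' hm' j hj q hqp hqj hq)

end Characterization

theorem blockchain_characterization_prob_general {Run Agent Tx σ ι : Type*}
    [MeasurableSpace Run] (T Δ : ℕ)
    (honest : Run → ℕ → Agent → Prop) (ledger : Run → ℕ → Agent → List Tx)
    (localState : Run → ℕ → Agent → Option σ)
    (hpresent : ∀ (r : Run) (m : ℕ) (i : Agent), honest r m i → localState r m i ≠ none)
    (hledger : ∀ (i : Agent) (q p : Run × ℕ), Sim localState i q p →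
      ledger q.1 q.2 i = ledger p.1 p.2 i)
    (μ : ι → MeasureTheory.Measure Run)
    (ε : ℝ) :
    List.TFAE
      [ -- (a) the system is T-Δ-ε-acceptable
        (∀ c : ι, ENNReal.ofReal (1 - ε) ≤ μ c {r | Acceptable T Δ honest ledger r}),
        -- (b)
        (∃ acc : Set Run, (∀ c : ι, ENNReal.ofReal (1 - ε) ≤ μ c acc) ∧
          ∀ r ∈ acc, ∀ (i j : Agent) (X : List Tx) (m : ℕ),
            honest r m i → TPrefix T X (ledger r m i) →
            ∀ m', m + Δ ≤ m' → honest r m' j → TPrefix T X (ledger r m' j)),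
        -- (c)
        (∃ acc : Set Run, (∀ c : ι, ENNReal.ofReal (1 - ε) ≤ μ c acc) ∧
          ∀ r ∈ acc, ∀ (i : Agent) (X : List Tx) (m : ℕ),
            honest r m i → TPrefix T X (ledger r m i) →
            ∀ m', m + Δ ≤ m' →
              EHacc honest localState acc (TP T ledger X) (r, m')),
        -- (d)
        (∃ acc : Set Run, (∀ c : ι, ENNReal.ofReal (1 - ε) ≤ μ c acc) ∧
          ∀ r ∈ acc, ∀ (i : Agent) (X : List Tx) (m : ℕ),
            honest r m i → TPrefix T X (ledger r m i) →
              CKacc Δ honest localState acc (TP T ledger X) (r, m)) ] := by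
  tfae_have 1 ↔ 2 := by
    constructor
    · exact fun ha => ⟨_, ha, fun r hr => acceptable_iff.1 hr⟩
    · rintro ⟨acc, hacc, h⟩ c
      exact (hacc c).trans (MeasureTheory.measure_mono fun r hr => acceptable_iff.2 (h r hr))
  tfae_have 2 ↔ 3 := by
    constructor
    · rintro ⟨acc, hacc, h⟩
      refine ⟨acc, hacc, fun r hr i X m hi hX m' hm' => ?_⟩
      exact (ehacc_iff_forall_honest (p := (r, m')) hpresent (tp_of_sim hledger X) hr).2
        fun j hj => h r hr i j X m hi hX m' hm' hj
    · rintro ⟨acc, hacc, h⟩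
      refine ⟨acc, hacc, fun r hr i j X m hi hX m' hm' hj => ?_⟩
      exact (ehacc_iff_forall_honest (p := (r, m')) hpresent (tp_of_sim hledger X) hr).1
        (h r hr i X m hi hX m' hm') j hj
  tfae_have 3 ↔ 4 := by
    constructor
    · rintro ⟨acc, hacc, h⟩
      exact ⟨acc, hacc, fun r hr i X m =>
        ckacc_of_iterAcc_zero (φ := TP T ledger X) (fun r hr i m => h r hr i X m) r hr i m⟩
    · rintro ⟨acc, hacc, h⟩
      exact ⟨acc, hacc, fun r hr i X m hi hX => h r hr i X m hi hX 0⟩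
  tfae_finish

/-- Theorem 7 (probabilistic characterization of blockchain protocols): the four
conditions are equivalent. -/
theorem blockchain_characterization_prob {Run Agent Tx σ ι : Type*}
    [MeasurableSpace Run] (T Δ : ℕ)
    (honest : Run → ℕ → Agent → Prop) (ledger : Run → ℕ → Agent → List Tx)
    (localState : Run → ℕ → Agent → Option σ)
    (hpresent : ∀ (r : Run) (m : ℕ) (i : Agent), honest r m i → localState r m i ≠ none)
    (hledger : ∀ (i : Agent) (q p : Run × ℕ), Sim localState i q p →
      ledger q.1 q.2 i = ledger p.1 p.2 i)
    (μ : ι → MeasureTheory.Measure Run)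
    (hprob : ∀ c : ι, MeasureTheory.IsProbabilityMeasure (μ c))
    (ε : ℝ) (hε0 : 0 ≤ ε) (hε1 : ε ≤ 1) :
    List.TFAE
      [ -- (a) the system is T-Δ-ε-acceptable
        (∀ c : ι, ENNReal.ofReal (1 - ε) ≤ μ c {r | Acceptable T Δ honest ledger r}),
        -- (b)
        (∃ acc : Set Run, (∀ c : ι, ENNReal.ofReal (1 - ε) ≤ μ c acc) ∧
          ∀ r ∈ acc, ∀ (i j : Agent) (X : List Tx) (m : ℕ),
            honest r m i → TPrefix T X (ledger r m i) →
            ∀ m', m + Δ ≤ m' → honest r m' j → TPrefix T X (ledger r m' j)),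
        -- (c)
        (∃ acc : Set Run, (∀ c : ι, ENNReal.ofReal (1 - ε) ≤ μ c acc) ∧
          ∀ r ∈ acc, ∀ (i : Agent) (X : List Tx) (m : ℕ),
            honest r m i → TPrefix T X (ledger r m i) →
            ∀ m', m + Δ ≤ m' →
              EHacc honest localState acc (TP T ledger X) (r, m')),
        -- (d)
        (∃ acc : Set Run, (∀ c : ι, ENNReal.ofReal (1 - ε) ≤ μ c acc) ∧
          ∀ r ∈ acc, ∀ (i : Agent) (X : List Tx) (m : ℕ),
            honest r m i → TPrefix T X (ledger r m i) →
              CKacc Δ honest localState acc (TP T ledger X) (r, m)) ] :=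
  blockchain_characterization_prob_general T Δ honest ledger localState hpresent hledger μ ε
end

section
/- For any fixed acc : Set Run, the following are equivalent: (i) every r ∈ acc satisfies: for all i, j, X, m, honest r m i and X a T-prefix of ledger r m i imply that for all m' ≥ m + Δ, honest r m' j implies X is a T-prefix of ledger r m' j; (ii) every r ∈ acc satisfies: for all i, X, m, honest r m i and X a T-prefix of ledger r m i imply that for all m' ≥ m + Δ, (E_H^{acc} TP_X) (r, m') holds; (iii) every r ∈ acc satisfies: for all i, X, m, honest r m i and X a T-prefix of ledger r m i imply (C^{acc} TP_X) (r, m). -/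
/-!
Since an agent's local state determines its ledger, at a point of an accepted run
`E_H^{acc} TP_X` holds iff every honest agent there has `X` as a `T`-prefix (for "only if",
take the point itself as the indistinguishable one); this gives (i) ⇔ (ii). For (ii) ⇒ (iii),
"some honest agent has `X` as a `T`-prefix" is an invariant: by (ii) it yields
`○^Δ□ E_H^{acc} TP_X`, which re-establishes it at every point `E_H^{acc}` quantifies over,
so induction on the depth gives every iterate. (iii) ⇒ (ii) is the first iterate.
-/

section

variable {Run Agent Tx σ : Type*} {honest : Run → ℕ → Agent → Prop}
  {localState : Run → ℕ → Agent → Option σ} {acc : Set Run}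

theorem Sim.self_of_ne_none {i : Agent} {p : Run × ℕ} (h : localState p.1 p.2 i ≠ none) :
    Sim localState i p p :=
  ⟨rfl, Option.isSome_iff_ne_none.mpr h⟩

theorem EHacc.apply_self
    (hpresent : ∀ r m i, honest r m i → localState r m i ≠ none)
    {φ : Run × ℕ → Agent → Prop} {p : Run × ℕ} {j : Agent}
    (h : EHacc honest localState acc φ p) (hp : p.1 ∈ acc) (hj : honest p.1 p.2 j) : φ p j :=
  h j hj p (Sim.self_of_ne_none (hpresent _ _ _ hj)) hj hp

theorem EHacc.tp_iff {T : ℕ} {ledger : Run → ℕ → Agent → List Tx}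
    (hpresent : ∀ r m i, honest r m i → localState r m i ≠ none)
    (hledger : ∀ i q p, Sim localState i q p → ledger q.1 q.2 i = ledger p.1 p.2 i)
    {X : List Tx} {r : Run} {m : ℕ} (hr : r ∈ acc) :
    EHacc honest localState acc (TP T ledger X) (r, m) ↔
      ∀ j, honest r m j → TPrefix T X (ledger r m j) := by
  refine ⟨fun h j hj => h.apply_self hpresent hr hj, fun h j hj q hsim _ _ => ?_⟩
  rw [TP, hledger j q (r, m) hsim]
  exact h j hj

theorem CKacc.of_invariant (Δ : ℕ) {φ : Run × ℕ → Agent → Prop} (ψ : Run × ℕ → Prop)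
    (hstep : ∀ p, p.1 ∈ acc → ψ p → NextBox Δ (EHacc honest localState acc φ) p)
    (hrestore : ∀ q j, honest q.1 q.2 j → φ q j → ψ q)
    {p : Run × ℕ} (hp : p.1 ∈ acc) (hψ : ψ p) : CKacc Δ honest localState acc φ p := by
  intro n
  induction n generalizing p with
  | zero => exact hstep p hp hψ
  | succ n ih =>
    intro m' hm' j hj q hsim hqj hq
    exact ih hq (hrestore q j hqj (hstep p hp hψ m' hm' j hj q hsim hqj hq))

end

/-- For a fixed set `acc` of runs, the per-run temporal condition (i), the `E_H^{acc}`
condition (ii), and the `acc`-relative common-knowledge condition (iii) are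
equivalent. -/
theorem acc_conditions_tfae {Run Agent Tx σ : Type*} (T Δ : ℕ)
    (honest : Run → ℕ → Agent → Prop) (ledger : Run → ℕ → Agent → List Tx)
    (localState : Run → ℕ → Agent → Option σ)
    (hpresent : ∀ (r : Run) (m : ℕ) (i : Agent), honest r m i → localState r m i ≠ none)
    (hledger : ∀ (i : Agent) (q p : Run × ℕ), Sim localState i q p →
      ledger q.1 q.2 i = ledger p.1 p.2 i)
    (acc : Set Run) :
    List.TFAE
      [ -- (i)
        (∀ r ∈ acc, ∀ (i j : Agent) (X : List Tx) (m : ℕ),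
          honest r m i → TPrefix T X (ledger r m i) →
          ∀ m', m + Δ ≤ m' → honest r m' j → TPrefix T X (ledger r m' j)),
        -- (ii)
        (∀ r ∈ acc, ∀ (i : Agent) (X : List Tx) (m : ℕ),
          honest r m i → TPrefix T X (ledger r m i) →
          ∀ m', m + Δ ≤ m' →
            EHacc honest localState acc (TP T ledger X) (r, m')),
        -- (iii)
        (∀ r ∈ acc, ∀ (i : Agent) (X : List Tx) (m : ℕ),
          honest r m i → TPrefix T X (ledger r m i) →
            CKacc Δ honest localState acc (TP T ledger X) (r, m)) ] := by
  tfae_have 1 → 2 := fun h1 r hr i X m hi hX m' hm' =>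
    (EHacc.tp_iff hpresent hledger hr).2 fun j hj => h1 r hr i j X m hi hX m' hm' hj
  tfae_have 2 → 1 := fun h2 r hr i j X m hi hX m' hm' hj =>
    (EHacc.tp_iff hpresent hledger hr).1 (h2 r hr i X m hi hX m' hm') j hj
  tfae_have 2 → 3 := fun h2 r hr i X m hi hX =>
    CKacc.of_invariant Δ (fun p => ∃ i, honest p.1 p.2 i ∧ TPrefix T X (ledger p.1 p.2 i))
      (fun p hp ⟨i, hi, hX⟩ => h2 p.1 hp i X p.2 hi hX)
      (fun _ j hj hX => ⟨j, hj, hX⟩) (p := (r, m)) hr ⟨i, hi, hX⟩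
  tfae_have 3 → 2 := fun h3 r hr i X m hi hX => h3 r hr i X m hi hX 0
  tfae_finish
end
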